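/- arXiv:2203.16437 — 8 statements merged into one kernel-verified Lean document; each statement's English description precedes it below -/
import Mathlib

section
/- Let f : [0,1] → [0,1] be differentiable and preserve Lebesgue measure (i.e., for every measurable U ⊆ [0,1], λ(U) = λ(f⁻¹(U))). Then either f(x) = x for all x, or f(x) = 1 - x for all x. -/
open MeasureTheory Set

/-- Oscillation lower bound: a measure preserving map expands every subinterval. -/
lemma osc_lb (f : ℝ → ℝ)
    (hmaps : MapsTo f (Icc (0:ℝ) 1) (Icc (0:ℝ) 1))
    (hcont : ContinuousOn f (Icc (0:ℝ) 1))
    (hmp : ∀ U ⊆ Icc (0:ℝ) 1, MeasurableSet U →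
      volume U = volume (f ⁻¹' U ∩ Icc (0:ℝ) 1))
    {u v : ℝ} (hu : 0 ≤ u) (hv : v ≤ 1) (huv : u ≤ v) :
    ∃ a ∈ Icc u v, ∃ b ∈ Icc u v, v - u ≤ f a - f b := by
  have hsub : Icc u v ⊆ Icc (0:ℝ) 1 := Icc_subset_Icc hu hv
  have hne : (Icc u v).Nonempty := nonempty_Icc.2 huv
  have hcpt : IsCompact (Icc u v) := isCompact_Icc
  obtain ⟨a, ha, hmax⟩ := hcpt.exists_isMaxOn hne (hcont.mono hsub)
  obtain ⟨b, hb, hmin⟩ := hcpt.exists_isMinOn hne (hcont.mono hsub)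
  refine ⟨a, ha, b, hb, ?_⟩
  have hfb0 : (0:ℝ) ≤ f b := (hmaps (hsub hb)).1
  have hfa1 : f a ≤ 1 := (hmaps (hsub ha)).2
  have hIccsub : Icc (f b) (f a) ⊆ Icc (0:ℝ) 1 := Icc_subset_Icc hfb0 hfa1
  have hvol := hmp (Icc (f b) (f a)) hIccsub measurableSet_Icc
  have hsub2 : Icc u v ⊆ f ⁻¹' Icc (f b) (f a) ∩ Icc (0:ℝ) 1 := by
    intro y hy
    exact ⟨⟨hmin hy, hmax hy⟩, hsub hy⟩
  have hle : volume (Icc u v) ≤ volume (Icc (f b) (f a)) := by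
    rw [hvol]; exact measure_mono hsub2
  rw [Real.volume_Icc, Real.volume_Icc] at hle
  have hba : f b ≤ f a := hmin ha
  have := (ENNReal.ofReal_le_ofReal_iff (by linarith)).1 hle
  linarith

/-- A differentiable, Lebesgue-measure-preserving map `f : [0,1] → [0,1]` is either the
identity or `x ↦ 1 - x`. -/
theorem stmt_0 (f : ℝ → ℝ)
    (hmaps : MapsTo f (Icc (0:ℝ) 1) (Icc (0:ℝ) 1))
    (hdiff : ∀ x ∈ Icc (0:ℝ) 1, DifferentiableWithinAt ℝ f (Icc (0:ℝ) 1) x)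
    (hmp : ∀ U ⊆ Icc (0:ℝ) 1, MeasurableSet U →
      volume U = volume (f ⁻¹' U ∩ Icc (0:ℝ) 1)) :
    (∀ x ∈ Icc (0:ℝ) 1, f x = x) ∨ (∀ x ∈ Icc (0:ℝ) 1, f x = 1 - x) := by
  set g : ℝ → ℝ := fun x => derivWithin f (Icc (0:ℝ) 1) x with hg
  have hcont : ContinuousOn f (Icc (0:ℝ) 1) :=
    fun x hx => (hdiff x hx).continuousWithinAt
  have hder : ∀ x ∈ Icc (0:ℝ) 1, HasDerivWithinAt f (g x) (Icc (0:ℝ) 1) x :=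
    fun x hx => (hdiff x hx).hasDerivWithinAt
  -- Step 1: |g x| ≥ 1 everywhere on [0,1]
  have habs : ∀ x ∈ Icc (0:ℝ) 1, 1 ≤ |g x| := by
    intro x hx
    by_contra hlt
    push_neg at hlt
    set ε : ℝ := (1 - |g x|) / 3 with hε
    have hεpos : 0 < ε := by rw [hε]; linarith
    have hlittle : ∀ᶠ y in nhdsWithin x (Icc (0:ℝ) 1),
        |f y - f x - (y - x) * g x| ≤ ε * |y - x| := by
      have h := (hder x hx).isLittleO.def hεpos
      filter_upwards [h] with y hy
      simpa [Real.norm_eq_abs, abs_mul, mul_comm] using hy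
    obtain ⟨δ, hδpos, hδ⟩ := Metric.mem_nhdsWithin_iff.1 hlittle
    set r : ℝ := min (δ / 2) 1 with hr
    have hrpos : 0 < r := by positivity
    have hrδ : r < δ := lt_of_le_of_lt (min_le_left _ _) (by linarith)
    have hr1 : r ≤ 1 := min_le_right _ _
    set u : ℝ := max 0 (x - r) with hu
    set v : ℝ := min 1 (x + r) with hv
    have hu0 : 0 ≤ u := le_max_left _ _
    have hv1 : v ≤ 1 := min_le_left _ _
    have hx0 : (0:ℝ) ≤ x := hx.1
    have hx1 : x ≤ 1 := hx.2
    have huv : r ≤ v - u := by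
      rcases le_total 0 (x - r) with h1 | h1 <;> rcases le_total (x + r) 1 with h2 | h2 <;>
        simp [hu, hv, max_eq_left, max_eq_right, min_eq_left, min_eq_right, h1, h2] <;> linarith
    have hmem : ∀ y ∈ Icc u v, |y - x| ≤ r := by
      intro y hy
      rw [abs_le]
      constructor
      · have := hy.1; have : x - r ≤ y := le_trans (le_max_right _ _) hy.1; linarith
      · have : y ≤ x + r := le_trans hy.2 (min_le_right _ _); linarith
    obtain ⟨a, ha, b, hb, hab⟩ := osc_lb f hmaps hcont hmp hu0 hv1 (by linarith)
    have hsubI : Icc u v ⊆ Icc (0:ℝ) 1 := Icc_subset_Icc hu0 hv1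
    have hest : ∀ y ∈ Icc u v, |f y - f x - (y - x) * g x| ≤ ε * r := by
      intro y hy
      have h1 : |f y - f x - (y - x) * g x| ≤ ε * |y - x| := hδ ⟨by
        rw [Metric.mem_ball, Real.dist_eq]
        exact lt_of_le_of_lt (hmem y hy) hrδ, hsubI hy⟩
      calc |f y - f x - (y - x) * g x| ≤ ε * |y - x| := h1
        _ ≤ ε * r := by nlinarith [hmem y hy, abs_nonneg (y - x)]
    have hea := hest a ha
    have heb := hest b hb
    have habsab : |a - b| ≤ v - u := by
      rw [abs_le]
      constructor
      · have := ha.1; have := hb.2; linarith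
      · have := ha.2; have := hb.1; linarith
    have key : f a - f b ≤ (|g x| + 2 * ε) * (v - u) := by
      have h1 : f a - f b = (f a - f x - (a - x) * g x) - (f b - f x - (b - x) * g x)
          + (a - b) * g x := by ring
      have h2 : (a - b) * g x ≤ |g x| * (v - u) := by
        calc (a - b) * g x ≤ |(a - b) * g x| := le_abs_self _
          _ = |a - b| * |g x| := abs_mul _ _
          _ ≤ (v - u) * |g x| := by
              apply mul_le_mul_of_nonneg_right habsab (abs_nonneg _)
          _ = |g x| * (v - u) := mul_comm _ _
      have h3 : (f a - f x - (a - x) * g x) ≤ ε * r := le_trans (le_abs_self _) hea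
      have h4 : -(f b - f x - (b - x) * g x) ≤ ε * r := le_trans (neg_le_abs _) heb
      have h5 : ε * r ≤ ε * (v - u) := mul_le_mul_of_nonneg_left huv hεpos.le
      linarith
    have hvu : v - u ≤ (|g x| + 2 * ε) * (v - u) := le_trans hab key
    nlinarith [hrpos, huv]
  -- Step 2: Darboux: g ≥ 1 everywhere or g ≤ -1 everywhere
  have h0mem : (0:ℝ) ∈ Icc (0:ℝ) 1 := ⟨le_refl _, zero_le_one⟩
  have hcases : ∀ x ∈ Icc (0:ℝ) 1, 1 ≤ g x ∨ g x ≤ -1 := by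
    intro x hx
    rcases le_or_gt 1 (g x) with h | h
    · exact Or.inl h
    · right
      have := habs x hx
      rcases abs_cases (g x) with ⟨h1, _⟩ | ⟨h1, _⟩ <;> linarith
  have hdarboux : (∀ x ∈ Icc (0:ℝ) 1, 1 ≤ g x) ∨ (∀ x ∈ Icc (0:ℝ) 1, g x ≤ -1) := by
    rcases hcases 0 h0mem with h0 | h0
    · left
      intro x hx
      rcases hcases x hx with h | h
      · exact h
      · exfalso
        have hx0 : (0:ℝ) ≤ x := hx.1
        have hsub : Icc (0:ℝ) x ⊆ Icc (0:ℝ) 1 := Icc_subset_Icc le_rfl hx.2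
        have hder' : ∀ y ∈ Icc (0:ℝ) x, HasDerivWithinAt f (g y) (Icc (0:ℝ) x) y :=
          fun y hy => (hder y (hsub hy)).mono hsub
        obtain ⟨c, hc, hgc⟩ := exists_hasDerivWithinAt_eq_of_lt_of_gt hx0 hder'
          (show g 0 > 0 by linarith) (show g x < 0 by linarith) (m := 0)
        have := habs c (hsub (Ioo_subset_Icc_self hc))
        rw [hgc] at this
        simp at this
        linarith
    · right
      intro x hx
      rcases hcases x hx with h | h
      · exfalso
        have hx0 : (0:ℝ) ≤ x := hx.1
        have hsub : Icc (0:ℝ) x ⊆ Icc (0:ℝ) 1 := Icc_subset_Icc le_rfl hx.2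
        have hder' : ∀ y ∈ Icc (0:ℝ) x, HasDerivWithinAt f (g y) (Icc (0:ℝ) x) y :=
          fun y hy => (hder y (hsub hy)).mono hsub
        obtain ⟨c, hc, hgc⟩ := exists_hasDerivWithinAt_eq_of_gt_of_lt hx0 hder'
          (show g 0 < 0 by linarith) (show 0 < g x by linarith) (m := 0)
        have := habs c (hsub (Ioo_subset_Icc_self hc))
        rw [hgc] at this
        simp at this
        linarith
      · exact h
  -- deriv = g on the interior
  have hderivOn : DifferentiableOn ℝ f (interior (Icc (0:ℝ) 1)) := by
    rw [interior_Icc]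
    intro x hx
    exact ((hdiff x (Ioo_subset_Icc_self hx)).differentiableAt
      (Icc_mem_nhds hx.1 hx.2)).differentiableWithinAt
  have hderiv_eq : ∀ x ∈ interior (Icc (0:ℝ) 1), deriv f x = g x := by
    rw [interior_Icc]
    intro x hx
    have hnhds : Icc (0:ℝ) 1 ∈ nhds x := Icc_mem_nhds hx.1 hx.2
    rw [hg]
    exact (derivWithin_of_mem_nhds hnhds).symm
  have h1mem : (1:ℝ) ∈ Icc (0:ℝ) 1 := ⟨zero_le_one, le_refl _⟩
  have hconv : Convex ℝ (Icc (0:ℝ) 1) := convex_Icc 0 1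
  rcases hdarboux with hge | hle
  · left
    have hmono : ∀ᵉ (x ∈ Icc (0:ℝ) 1) (y ∈ Icc (0:ℝ) 1), x ≤ y →
        1 * (y - x) ≤ f y - f x := by
      apply hconv.mul_sub_le_image_sub_of_le_deriv hcont hderivOn
      intro x hx
      rw [hderiv_eq x hx]
      exact hge x (interior_subset hx)
    have h01 := hmono 0 h0mem 1 h1mem zero_le_one
    have hf00 : f 0 = 0 := by
      have := (hmaps h0mem).1; have := (hmaps h1mem).2; linarith
    have hf11 : f 1 = 1 := by
      have := (hmaps h0mem).1; have := (hmaps h1mem).2; linarith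
    intro x hx
    have h1 := hmono 0 h0mem x hx hx.1
    have h2 := hmono x hx 1 h1mem hx.2
    rw [hf00] at h1; rw [hf11] at h2
    linarith
  · right
    have hmono : ∀ x ∈ Icc (0:ℝ) 1, ∀ y ∈ Icc (0:ℝ) 1, x ≤ y →
        f y - f x ≤ (-1) * (y - x) := by
      apply hconv.image_sub_le_mul_sub_of_deriv_le hcont hderivOn
      intro x hx
      rw [hderiv_eq x hx]
      exact hle x (interior_subset hx)
    have h01 := hmono 0 h0mem 1 h1mem zero_le_one
    have hf01 : f 0 = 1 := by
      have := (hmaps h0mem).2; have := (hmaps h1mem).1; linarith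
    have hf10 : f 1 = 0 := by
      have := (hmaps h0mem).2; have := (hmaps h1mem).1; linarith
    intro x hx
    have h1 := hmono 0 h0mem x hx hx.1
    have h2 := hmono x hx 1 h1mem hx.2
    rw [hf01] at h1; rw [hf10] at h2
    linarith
end

section
/- Let f : [0,1] → [0,1] be differentiable and Lebesgue measure preserving. Then f'(x) ≠ 0 for every x ∈ [0,1]. -/
open MeasureTheory Set

/-- A differentiable, Lebesgue-measure-preserving map `f : [0,1] → [0,1]` has nowhere
vanishing derivative (one-sided at the endpoints). -/
theorem stmt_2 (f f' : ℝ → ℝ)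
    (hmaps : MapsTo f (Icc (0:ℝ) 1) (Icc (0:ℝ) 1))
    (hderiv : ∀ x ∈ Icc (0:ℝ) 1, HasDerivWithinAt f (f' x) (Icc (0:ℝ) 1) x)
    (hmp : ∀ U ⊆ Icc (0:ℝ) 1, MeasurableSet U →
      volume U = volume (f ⁻¹' U ∩ Icc (0:ℝ) 1)) :
    ∀ x ∈ Icc (0:ℝ) 1, f' x ≠ 0 := by
  intro x₀ hx₀ hf'
  have hd := hderiv x₀ hx₀
  rw [hf'] at hd
  have ho := hasDerivWithinAt_iff_isLittleO.mp hd
  simp only [smul_zero, sub_zero] at ho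
  have hev := ho.def (by norm_num : (0:ℝ) < 1/4)
  obtain ⟨δ, hδ, hδ'⟩ := Metric.mem_nhdsWithin_iff.mp hev
  set r := min (δ/2) (1/2) with hrdef
  have hr0 : 0 < r := lt_min (by linarith) (by norm_num)
  have hrδ : r < δ := lt_of_le_of_lt (min_le_left _ _) (by linarith)
  have hrh : r ≤ 1/2 := min_le_right _ _
  -- find an interval of length r inside [0,1] whose points are r-close to x₀
  obtain ⟨a, b, hab, hsub, hclose⟩ :
      ∃ a b : ℝ, b - a = r ∧ Icc a b ⊆ Icc (0:ℝ) 1 ∧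
        ∀ x ∈ Icc a b, |x - x₀| ≤ r := by
    rcases le_or_gt x₀ (1/2) with h | h
    · refine ⟨x₀, x₀ + r, by ring, ?_, ?_⟩
      · intro x hx
        exact ⟨le_trans hx₀.1 hx.1, le_trans hx.2 (by linarith)⟩
      · intro x hx
        rw [abs_le]; constructor <;> [linarith [hx.1]; linarith [hx.2]]
    · refine ⟨x₀ - r, x₀, by ring, ?_, ?_⟩
      · intro x hx
        exact ⟨le_trans (by linarith) hx.1, le_trans hx.2 hx₀.2⟩
      · intro x hx
        rw [abs_le]; constructor <;> [linarith [hx.1]; linarith [hx.2]]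
  -- the target small set
  set U : Set ℝ := Icc (f x₀ - r/4) (f x₀ + r/4) ∩ Icc 0 1 with hU
  have hUsub : U ⊆ Icc (0:ℝ) 1 := inter_subset_right
  have hUmeas : MeasurableSet U := (measurableSet_Icc).inter measurableSet_Icc
  have hkey : Icc a b ⊆ f ⁻¹' U ∩ Icc (0:ℝ) 1 := by
    intro x hx
    have hxI : x ∈ Icc (0:ℝ) 1 := hsub hx
    refine ⟨⟨?_, hmaps hxI⟩, hxI⟩
    have hdist : dist x x₀ < δ := by
      rw [Real.dist_eq]
      exact lt_of_le_of_lt (hclose x hx) hrδ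
    have hb : ‖f x - f x₀‖ ≤ 1/4 * ‖x - x₀‖ :=
      hδ' ⟨Metric.mem_ball.mpr hdist, hxI⟩
    simp only [Real.norm_eq_abs] at hb
    have : |f x - f x₀| ≤ r/4 := by
      calc |f x - f x₀| ≤ 1/4 * |x - x₀| := hb
        _ ≤ 1/4 * r := by nlinarith [hclose x hx, abs_nonneg (x - x₀)]
        _ = r/4 := by ring
    rw [abs_le] at this
    constructor <;> [linarith [this.1]; linarith [this.2]]
  have h1 : ENNReal.ofReal r ≤ volume U := by
    rw [hmp U hUsub hUmeas]
    calc ENNReal.ofReal r = volume (Icc a b) := by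
          rw [Real.volume_Icc, hab]
      _ ≤ _ := measure_mono hkey
  have h2 : volume U ≤ ENNReal.ofReal (r/2) := by
    calc volume U ≤ volume (Icc (f x₀ - r/4) (f x₀ + r/4)) :=
          measure_mono inter_subset_left
      _ = ENNReal.ofReal (r/2) := by rw [Real.volume_Icc]; ring_nf
  have := (ENNReal.ofReal_le_ofReal_iff (by linarith)).mp (h1.trans h2)
  linarith
end

section
/- Let p_A and p_C be probability measures on ℝ with continuous strictly positive densities, and let f : ℝ × B → ℝ be differentiable, where B = ℝⁿ, such that for every b ∈ B the map f(·, b) : ℝ → ℝ pushes p_A forward to p_C. Then f is constant in its second argument: f(a, b) = f(a, b') for all a ∈ ℝ and b, b' ∈ B. -/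
/-!
A differentiable measure-preserving map between measures with continuous positive densities
cannot have a critical point: near a zero of `g'` a tiny interval of positive mass would be
squeezed into an interval of much smaller mass. By Darboux, each section `f(·, b)` is therefore
strictly monotone or strictly antitone, so `F_C (f (a, b))` equals either `F_A a` or
`1 - F_A a`, where `F_A, F_C` are the distribution functions. As `F_C` is injective, for fixed
`a` the continuous map `b ↦ f (a, b)` takes at most two values on the connected space `ℝⁿ`,
hence is constant.
-/

open MeasureTheory Set Filter Topology Metric
open scoped ENNReal

section WithDensity

variable {α : Type*} [MeasurableSpace α] {μ : Measure α} {f : α → ℝ≥0∞} {s : Set α} {c : ℝ≥0∞}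

lemma le_withDensity_apply_of_forall_le (hs : MeasurableSet s) (h : ∀ x ∈ s, c ≤ f x) :
    c * μ s ≤ μ.withDensity f s := by
  rw [withDensity_apply _ hs, ← setLIntegral_const]
  exact setLIntegral_mono' hs h

lemma withDensity_apply_le_of_forall_le (hs : MeasurableSet s) (h : ∀ x ∈ s, f x ≤ c) :
    μ.withDensity f s ≤ c * μ s := by
  rw [withDensity_apply _ hs, ← setLIntegral_const]
  exact setLIntegral_mono' hs h

end WithDensity

lemma strictMono_measure_Iic_of_absolutelyContinuous {μ : Measure ℝ} [IsFiniteMeasure μ]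
    (hμ : volume ≪ μ) : StrictMono fun t => μ (Iic t) := by
  intro s t hst
  have hpos : μ (Ioc s t) ≠ 0 := fun h => hst.not_ge (by simpa using hμ h)
  calc μ (Iic s) < μ (Iic s) + μ (Ioc s t) := ENNReal.lt_add_right (measure_ne_top _ _) hpos
    _ = μ (Iic t) := by
      rw [← measure_union (Iic_disjoint_Ioc le_rfl) measurableSet_Ioc,
        Iic_union_Ioc_eq_Iic hst.le]

lemma strictMono_or_strictAnti_of_hasDerivAt_ne_zero {g g' : ℝ → ℝ}
    (hg : ∀ x, HasDerivAt g (g' x) x) (hg' : ∀ x, g' x ≠ 0) : StrictMono g ∨ StrictAnti g := by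
  rcases hasDerivWithinAt_forall_lt_or_forall_gt_of_forall_ne convex_univ
    (fun x _ => (hg x).hasDerivWithinAt) (fun x _ => hg' x) with hneg | hpos
  · exact Or.inr (strictAnti_of_hasDerivAt_neg hg fun x => hneg x (mem_univ x))
  · exact Or.inl (strictMono_of_hasDerivAt_pos hg fun x => hpos x (mem_univ x))

namespace MeasureTheory.MeasurePreserving

variable {μ ν : Measure ℝ} {g : ℝ → ℝ}

lemma measure_Iic_apply_of_strictMono (hg : MeasurePreserving g μ ν) (hmono : StrictMono g)
    (a : ℝ) : ν (Iic (g a)) = μ (Iic a) := by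
  rw [← hg.measure_preimage measurableSet_Iic.nullMeasurableSet]
  congr 1
  ext x
  exact hmono.le_iff_le

lemma measure_Iic_apply_of_strictAnti (hg : MeasurePreserving g μ ν) (hanti : StrictAnti g)
    (a : ℝ) : ν (Iic (g a)) = μ (Ici a) := by
  rw [← hg.measure_preimage measurableSet_Iic.nullMeasurableSet]
  congr 1
  ext x
  exact hanti.le_iff_ge

lemma mul_le_mul_of_mapsTo_closedBall {ρ σ : ℝ → ℝ}
    (hg : MeasurePreserving g (volume.withDensity fun x => ENNReal.ofReal (ρ x))
      (volume.withDensity fun y => ENNReal.ofReal (σ y)))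
    {x₀ y₀ δ r m M : ℝ} (hm : 0 ≤ m) (hM : 0 ≤ M) (hr : 0 ≤ r)
    (hmaps : MapsTo g (closedBall x₀ δ) (closedBall y₀ r))
    (hρ : ∀ x ∈ closedBall x₀ δ, m ≤ ρ x) (hσ : ∀ y ∈ closedBall y₀ r, σ y ≤ M) :
    m * δ ≤ M * r := by
  have key : ENNReal.ofReal (m * (2 * δ)) ≤ ENNReal.ofReal (M * (2 * r)) := calc
    ENNReal.ofReal (m * (2 * δ)) = ENNReal.ofReal m * volume (closedBall x₀ δ) := by
      rw [Real.volume_closedBall, ENNReal.ofReal_mul hm]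
    _ ≤ volume.withDensity (fun x => ENNReal.ofReal (ρ x)) (closedBall x₀ δ) :=
      le_withDensity_apply_of_forall_le measurableSet_closedBall
        fun x hx => ENNReal.ofReal_le_ofReal (hρ x hx)
    _ ≤ volume.withDensity (fun x => ENNReal.ofReal (ρ x)) (g ⁻¹' closedBall y₀ r) :=
      measure_mono hmaps
    _ = volume.withDensity (fun y => ENNReal.ofReal (σ y)) (closedBall y₀ r) :=
      hg.measure_preimage measurableSet_closedBall.nullMeasurableSet
    _ ≤ ENNReal.ofReal M * volume (closedBall y₀ r) :=
      withDensity_apply_le_of_forall_le measurableSet_closedBall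
        fun y hy => ENNReal.ofReal_le_ofReal (hσ y hy)
    _ = ENNReal.ofReal (M * (2 * r)) := by
      rw [Real.volume_closedBall, ENNReal.ofReal_mul hM]
  rw [ENNReal.ofReal_le_ofReal_iff (by positivity)] at key
  linarith

end MeasureTheory.MeasurePreserving

theorem HasDerivAt.ne_zero_of_measurePreserving {ρ σ g : ℝ → ℝ} {x₀ g' : ℝ}
    (hd : HasDerivAt g g' x₀)
    (hg : MeasurePreserving g (volume.withDensity fun x => ENNReal.ofReal (ρ x))
      (volume.withDensity fun y => ENNReal.ofReal (σ y)))
    (hρ : ContinuousAt ρ x₀) (hρ₀ : 0 < ρ x₀) (hσ : ContinuousAt σ (g x₀)) : g' ≠ 0 := by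
  rintro rfl
  set m := ρ x₀ / 2
  set M := |σ (g x₀)| + 1
  have hm : 0 < m := half_pos hρ₀
  have hM : 0 < M := by positivity
  set ε := m / (2 * M)
  have hε : 0 < ε := by positivity
  have hx : {x | |g x - g x₀| ≤ ε * |x - x₀| ∧ m ≤ ρ x} ∈ 𝓝 x₀ := by
    filter_upwards [(hasDerivAt_iff_isLittleO.1 hd).def hε,
      hρ.eventually (lt_mem_nhds (half_lt_self hρ₀))] with x hlo hρx
    simpa using And.intro hlo hρx.le
  have hy : {y | σ y ≤ M} ∈ 𝓝 (g x₀) :=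
    hσ.eventually (ge_mem_nhds ((le_abs_self _).trans_lt (lt_add_one _)))
  have hεδ : Tendsto (fun δ => ε * δ) (𝓝 0) (𝓝 0) :=
    (continuous_const_mul ε).tendsto' 0 0 (mul_zero ε)
  have hsmall : ∀ᶠ δ in 𝓝[>] 0, closedBall x₀ δ ⊆ _ ∧ closedBall (g x₀) (ε * δ) ⊆ _ :=
    ((eventually_closedBall_subset hx).and
      (hεδ.eventually (eventually_closedBall_subset hy))).filter_mono nhdsWithin_le_nhds
  obtain ⟨δ, ⟨hδx, hδy⟩, hδ⟩ := (hsmall.and self_mem_nhdsWithin).exists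
  have hmaps : MapsTo g (closedBall x₀ δ) (closedBall (g x₀) (ε * δ)) := fun x hx => by
    have hgx := (hδx hx).1
    rw [mem_closedBall, Real.dist_eq] at hx ⊢
    exact hgx.trans (mul_le_mul_of_nonneg_left hx hε.le)
  have key := hg.mul_le_mul_of_mapsTo_closedBall hm.le hM.le (by positivity) hmaps
    (fun x hx => (hδx hx).2) hδy
  have hMε : M * ε = m / 2 := by simp only [ε]; field_simp
  nlinarith

theorem stmt_3_general (n : ℕ) (ρA ρC : ℝ → ℝ)
    (hρAc : Continuous ρA) (hρApos : ∀ x, 0 < ρA x)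
    (hρCc : Continuous ρC) (hρCpos : ∀ x, 0 < ρC x)
    (pA pC : Measure ℝ)
    (hpA : pA = volume.withDensity fun x => ENNReal.ofReal (ρA x))
    (hpC : pC = volume.withDensity fun x => ENNReal.ofReal (ρC x))
    (hCpr : IsProbabilityMeasure pC)
    (f : ℝ × (Fin n → ℝ) → ℝ) (hf : Differentiable ℝ f)
    (hmp : ∀ b : Fin n → ℝ, MeasurePreserving (fun a => f (a, b)) pA pC) :
    ∀ (a : ℝ) (b b' : Fin n → ℝ), f (a, b) = f (a, b') := by
  intro a b b'
  have hsection (b : Fin n → ℝ) (x : ℝ) :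
      HasDerivAt (fun a => f (a, b)) (fderiv ℝ f (x, b) (1, 0)) x :=
    (hf (x, b)).hasFDerivAt.comp_hasDerivAt x ((hasDerivAt_id x).prodMk (hasDerivAt_const x b))
  have hmonotone (b : Fin n → ℝ) :
      StrictMono (fun a => f (a, b)) ∨ StrictAnti (fun a => f (a, b)) :=
    strictMono_or_strictAnti_of_hasDerivAt_ne_zero (hsection b) fun x =>
      (hsection b x).ne_zero_of_measurePreserving (hpA ▸ hpC ▸ hmp b)
        hρAc.continuousAt (hρApos x) hρCc.continuousAt
  have hcdf : StrictMono fun t => pC (Iic t) :=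
    strictMono_measure_Iic_of_absolutelyContinuous <| hpC ▸ withDensity_absolutelyContinuous'
      (by fun_prop) (ae_of_all _ fun x => by simpa using hρCpos x)
  have hvalues : MapsTo (fun b => f (a, b)) univ
      ((fun t => pC (Iic t)) ⁻¹' {pA (Iic a), pA (Ici a)}) :=
    fun b _ => (hmonotone b).imp (fun h => (hmp b).measure_Iic_apply_of_strictMono h a)
      (fun h => (hmp b).measure_Iic_apply_of_strictAnti h a)
  exact isPreconnected_univ.constant_of_mapsTo
    ((toFinite _).preimage hcdf.injective.injOn).isDiscrete
    (hf.continuous.comp (Continuous.prodMk_right a)).continuousOn hvalues (mem_univ b) (mem_univ b)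

/-- If `p_A, p_C` are probability measures on `ℝ` with continuous strictly positive
densities and `f : ℝ × ℝⁿ → ℝ` is differentiable with `f(·, b)` pushing `p_A` forward to
`p_C` for every `b`, then `f` is constant in its second argument. -/
theorem stmt_3 (n : ℕ) (ρA ρC : ℝ → ℝ)
    (hρAc : Continuous ρA) (hρApos : ∀ x, 0 < ρA x)
    (hρCc : Continuous ρC) (hρCpos : ∀ x, 0 < ρC x)
    (pA pC : Measure ℝ)
    (hpA : pA = volume.withDensity fun x => ENNReal.ofReal (ρA x))
    (hpC : pC = volume.withDensity fun x => ENNReal.ofReal (ρC x))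
    (hApr : IsProbabilityMeasure pA) (hCpr : IsProbabilityMeasure pC)
    (f : ℝ × (Fin n → ℝ) → ℝ) (hf : Differentiable ℝ f)
    (hmp : ∀ b : Fin n → ℝ, MeasurePreserving (fun a => f (a, b)) pA pC) :
    ∀ (a : ℝ) (b b' : Fin n → ℝ), f (a, b) = f (a, b') :=
  stmt_3_general n ρA ρC hρAc hρApos hρCc hρCpos pA pC hpA hpC hCpr f hf hmp
end

section
/- In an acyclic SCM with pointwise-diffeomorphic causal mechanisms, the solution function s : E → Z defined recursively by s(ε)_i = f_i(ε_i; s(ε)_{pa_i}) is a diffeomorphism from the noise space to the causal-variable space. -/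
/-- In an acyclic SCM (with the nodes listed in topological order, so that each mechanism
`f i` only depends on the parent values `z j` for `j < i`) whose causal mechanisms are
jointly smooth and pointwise diffeomorphic in the noise argument, the solution function
`s`, defined by the recursion `s(ε)_i = f_i(ε_i; s(ε))`, is a diffeomorphism of `ℝⁿ`. -/
theorem stmt_7 (n : ℕ) (f : Fin n → ℝ → (Fin n → ℝ) → ℝ)
    (hsmooth : ∀ i, ContDiff ℝ (⊤ : ℕ∞) (fun p : ℝ × (Fin n → ℝ) => f i p.1 p.2))
    (htri : ∀ (i : Fin n) (ε : ℝ) (z z' : Fin n → ℝ),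
      (∀ j, j < i → z j = z' j) → f i ε z = f i ε z')
    (hdiffeo : ∀ (i : Fin n) (z : Fin n → ℝ), ∃ g : ℝ → ℝ, ContDiff ℝ (⊤ : ℕ∞) g ∧
      Function.LeftInverse g (fun e => f i e z) ∧
      Function.RightInverse g (fun e => f i e z))
    (s : (Fin n → ℝ) → (Fin n → ℝ))
    (hs : ∀ (ε : Fin n → ℝ) (i : Fin n), s ε i = f i (ε i) (s ε)) :
    ∃ t : (Fin n → ℝ) → (Fin n → ℝ),
      Function.LeftInverse t s ∧ Function.RightInverse t s ∧
      ContDiff ℝ (⊤ : ℕ∞) s ∧ ContDiff ℝ (⊤ : ℕ∞) t := by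
  classical
  -- the pointwise inverse of the mechanisms
  set Finv : Fin n → (Fin n → ℝ) → ℝ → ℝ := fun i z => (hdiffeo i z).choose with hFinv
  have hFl : ∀ i z e, Finv i z (f i e z) = e := fun i z e => (hdiffeo i z).choose_spec.2.1 e
  have hFr : ∀ i z y, f i (Finv i z y) z = y := fun i z y => (hdiffeo i z).choose_spec.2.2 y
  -- smoothness of s, coordinatewise by strong induction
  have hscoord : ∀ m : ℕ, ∀ i : Fin n, (i : ℕ) = m → ContDiff ℝ (⊤ : ℕ∞) fun ε => s ε i := by
    intro m
    induction m using Nat.strong_induction_on with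
    | _ m IH =>
      intro i him
      have hrep : ∀ ε : Fin n → ℝ,
          s ε i = f i (ε i) (fun j => if j < i then s ε j else 0) := by
        intro ε
        refine (hs ε i).trans (htri i (ε i) (s ε) _ fun j hj => by simp [hj])
      have hg : ContDiff ℝ (⊤ : ℕ∞) fun ε : Fin n → ℝ => (fun j => if j < i then s ε j else 0) := by
        refine contDiff_pi.mpr fun j => ?_
        by_cases h : j < i
        · simp only [if_pos h]
          exact IH j (by omega) j rfl
        · simp only [if_neg h]
          exact contDiff_const
      have hcomp : ContDiff ℝ (⊤ : ℕ∞) fun ε : Fin n → ℝ =>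
          f i (ε i) (fun j => if j < i then s ε j else 0) := by
        exact (hsmooth i).comp ((contDiff_pi.mp contDiff_id i).prodMk hg)
      have heq : (fun ε => s ε i) =
          fun ε : Fin n → ℝ => f i (ε i) (fun j => if j < i then s ε j else 0) :=
        funext hrep
      rw [heq]
      exact hcomp
  have hsmooth_s : ContDiff ℝ (⊤ : ℕ∞) s := contDiff_pi.mpr fun i => hscoord i i rfl
  -- the candidate inverse
  refine ⟨fun z i => Finv i z (z i), ?_, ?_, hsmooth_s, ?_⟩
  · -- left inverse
    intro ε
    funext i
    have := hs ε i
    simp only []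
    rw [this, hFl]
  · -- right inverse
    intro z
    funext i
    have key : ∀ m : ℕ, ∀ i : Fin n, (i : ℕ) = m → s (fun j => Finv j z (z j)) i = z i := by
      intro m
      induction m using Nat.strong_induction_on with
      | _ m IH =>
        intro i him
        rw [hs]
        rw [htri i _ (s fun j => Finv j z (z j)) z fun j hj => IH j (by omega) j rfl]
        exact hFr i z (z i)
    exact key i i rfl
  · -- smoothness of the inverse
    have hFinv_smooth : ∀ i : Fin n,
        ContDiff ℝ (⊤ : ℕ∞) fun q : ℝ × (Fin n → ℝ) => Finv i q.2 q.1 := by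
      intro i
      set Fm : ℝ × (Fin n → ℝ) → ℝ := fun p => f i p.1 p.2 with hFm
      set Ψ : ℝ × (Fin n → ℝ) → ℝ × (Fin n → ℝ) := fun p => (Fm p, p.2) with hΨdef
      set Ψinv : ℝ × (Fin n → ℝ) → ℝ × (Fin n → ℝ) := fun q => (Finv i q.2 q.1, q.2)
        with hΨinvdef
      have hΨsmooth : ContDiff ℝ (⊤ : ℕ∞) Ψ := (hsmooth i).prodMk contDiff_snd
      have hΨli : ∀ p, Ψinv (Ψ p) = p := by
        intro p; simp only [hΨinvdef, hΨdef, hFm]; exact Prod.ext (hFl i p.2 p.1) rfl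
      have hΨri : ∀ q, Ψ (Ψinv q) = q := by
        intro q; simp only [hΨinvdef, hΨdef, hFm]; exact Prod.ext (hFr i q.2 q.1) rfl
      have key : ∀ q, ContDiffAt ℝ (⊤ : ℕ∞) Ψinv q := by
        intro q
        set p : ℝ × (Fin n → ℝ) := Ψinv q with hp
        have hpq : Ψ p = q := hΨri q
        have hFmdiff : DifferentiableAt ℝ Fm p :=
          ((hsmooth i).differentiable (by simp)).differentiableAt
        set A : ℝ × (Fin n → ℝ) →L[ℝ] ℝ := fderiv ℝ Fm p with hA
        have hFm' : HasFDerivAt Fm A p := hFmdiff.hasFDerivAt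
        set a : ℝ := A (1, 0) with ha
        -- a ≠ 0 via the pointwise inverse
        have hane : a ≠ 0 := by
          have h1 : HasDerivAt (fun e => f i e p.2) a p.1 := by
            have hcurve : HasDerivAt (fun e : ℝ => (e, p.2)) ((1 : ℝ), (0 : Fin n → ℝ)) p.1 :=
              (hasDerivAt_id p.1).prodMk (hasDerivAt_const _ _)
            exact hFm'.comp_hasDerivAt p.1 hcurve
          set g : ℝ → ℝ := (hdiffeo i p.2).choose with hg
          have hgs : ContDiff ℝ (⊤ : ℕ∞) g := (hdiffeo i p.2).choose_spec.1
          have hgl : Function.LeftInverse g (fun e => f i e p.2) :=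
            (hdiffeo i p.2).choose_spec.2.1
          have h2 : HasDerivAt g (deriv g (f i p.1 p.2)) (f i p.1 p.2) :=
            ((hgs.differentiable (by simp)).differentiableAt).hasDerivAt
          have h3 : HasDerivAt (g ∘ fun e => f i e p.2) (deriv g (f i p.1 p.2) * a) p.1 :=
            h2.comp p.1 h1
          have h4 : (g ∘ fun e => f i e p.2) = id := funext fun e => hgl e
          have h5 : HasDerivAt (g ∘ fun e => f i e p.2) 1 p.1 := by
            rw [h4]; simpa using hasDerivAt_id p.1
          have h6 : deriv g (f i p.1 p.2) * a = 1 := h3.unique h5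
          intro h0
          rw [h0, mul_zero] at h6
          exact zero_ne_one h6
        have hAlin : ∀ (u : ℝ) (v : Fin n → ℝ), A (u, v) = u * a + A (0, v) := by
          intro u v
          have : ((u, v) : ℝ × (Fin n → ℝ)) = u • ((1 : ℝ), (0 : Fin n → ℝ)) + ((0 : ℝ), v) := by
            ext
            · simp
            · simp
          rw [this, map_add, map_smul]
          simp [ha, smul_eq_mul]
        -- the derivative of Ψ as a continuous linear equiv
        set M : ℝ × (Fin n → ℝ) →L[ℝ] ℝ × (Fin n → ℝ) :=
          ((a⁻¹ : ℝ) • (ContinuousLinearMap.fst ℝ ℝ (Fin n → ℝ) -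
            A.comp ((ContinuousLinearMap.inr ℝ ℝ (Fin n → ℝ)).comp
              (ContinuousLinearMap.snd ℝ ℝ (Fin n → ℝ))))).prod
            (ContinuousLinearMap.snd ℝ ℝ (Fin n → ℝ)) with hM
        set Lc : ℝ × (Fin n → ℝ) →L[ℝ] ℝ × (Fin n → ℝ) :=
          A.prod (ContinuousLinearMap.snd ℝ ℝ (Fin n → ℝ)) with hLc
        have hMl : Function.LeftInverse M Lc := by
          intro x
          obtain ⟨u, v⟩ := x
          simp only [hM, hLc, ContinuousLinearMap.prod_apply, ContinuousLinearMap.smul_apply,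
            ContinuousLinearMap.sub_apply, ContinuousLinearMap.coe_fst',
            ContinuousLinearMap.coe_snd', ContinuousLinearMap.comp_apply,
            ContinuousLinearMap.inr_apply, smul_eq_mul]
          refine Prod.ext ?_ rfl
          rw [hAlin u v]
          field_simp
          ring
        have hMr : Function.RightInverse M Lc := by
          intro x
          obtain ⟨pp, qq⟩ := x
          simp only [hM, hLc, ContinuousLinearMap.prod_apply, ContinuousLinearMap.smul_apply,
            ContinuousLinearMap.sub_apply, ContinuousLinearMap.coe_fst',
            ContinuousLinearMap.coe_snd', ContinuousLinearMap.comp_apply,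
            ContinuousLinearMap.inr_apply, smul_eq_mul]
          refine Prod.ext ?_ rfl
          rw [hAlin _ qq]
          field_simp
          ring
        set L : (ℝ × (Fin n → ℝ)) ≃L[ℝ] (ℝ × (Fin n → ℝ)) :=
          ContinuousLinearEquiv.equivOfInverse Lc M hMl hMr with hL
        have hLcoe : (L : ℝ × (Fin n → ℝ) →L[ℝ] ℝ × (Fin n → ℝ)) = Lc := rfl
        have hΨ' : HasFDerivAt Ψ (L : ℝ × (Fin n → ℝ) →L[ℝ] ℝ × (Fin n → ℝ)) p := by
          rw [hLcoe, hLc]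
          exact hFm'.prodMk (hasFDerivAt_snd)
        have hΨc : ContDiffAt ℝ (⊤ : ℕ∞) Ψ p := hΨsmooth.contDiffAt
        have hstrict : HasStrictFDerivAt Ψ
            (L : ℝ × (Fin n → ℝ) →L[ℝ] ℝ × (Fin n → ℝ)) p :=
          hΨc.hasStrictFDerivAt' hΨ' (by simp)
        have hloc : ContDiffAt ℝ (⊤ : ℕ∞) (hΨc.localInverse hΨ' (by simp)) (Ψ p) :=
          hΨc.to_localInverse hΨ' (by simp)
        have hev : ∀ᶠ y in nhds (Ψ p), Ψ (hΨc.localInverse hΨ' (by simp) y) = y :=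
          hstrict.eventually_right_inverse
        have heq : Ψinv =ᶠ[nhds (Ψ p)] (hΨc.localInverse hΨ' (by simp)) := by
          filter_upwards [hev] with y hy
          calc Ψinv y = Ψinv (Ψ (hΨc.localInverse hΨ' (by simp) y)) := by rw [hy]
          _ = hΨc.localInverse hΨ' (by simp) y := hΨli _
        have : ContDiffAt ℝ (⊤ : ℕ∞) Ψinv (Ψ p) := hloc.congr_of_eventuallyEq heq
        rwa [hpq] at this
      have hΨinv_smooth : ContDiff ℝ (⊤ : ℕ∞) Ψinv := contDiff_iff_contDiffAt.mpr key
      exact contDiff_fst.comp hΨinv_smooth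
    refine contDiff_pi.mpr fun i => ?_
    have h1 : ContDiff ℝ (⊤ : ℕ∞) (fun z : Fin n → ℝ => z i) := contDiff_pi.mp contDiff_id i
    exact (hFinv_smooth i).comp (h1.prodMk contDiff_id)
end

section
/- Let (φ, φ) : Z × Z → Z' × Z' be a diffeomorphism mapping a finite mixture measure μ = Σ_I p(I) μ_I to a finite mixture μ' = Σ_{I'} p'(I') μ'_{I'}, where the components μ_I (resp. μ'_{I'}) are mutually singular (each pair of distinct components has intersection of supports of measure zero under both). Then there exists a bijection ψ between the index sets such that (φ, φ) pushes μ_I forward to μ'_{ψ(I)} and p(I) = p'(ψ(I)) for all I. -/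
/-!
Transport the first mixture by `(φ, φ)`; the two mixtures then live on the same space. A component
of either side cannot be mutually singular with the whole mixture, which contains it with positive
weight, so by the dichotomy it equals a component of the other side; mutual singularity within each
side makes this matching a bijection. Restricting the mixture to a set that carries one component and
is null for all the others isolates that component's weight.
-/

open MeasureTheory
open scoped ENNReal

namespace MeasureTheory.Measure

variable {α ι ι' : Type*} [MeasurableSpace α] [Fintype ι] [Fintype ι']

theorem mutuallySingular_sum_smul_iff {ν : Measure α} {m : ι → Measure α} {c : ι → ℝ≥0∞}
    (hc : ∀ i, c i ≠ 0) : ν ⟂ₘ ∑ i, c i • m i ↔ ∀ i, ν ⟂ₘ m i := by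
  rw [← sum_fintype, MutuallySingular.sum_right]
  refine forall_congr' fun i => ⟨fun h => ?_, fun h => (h.symm.smul (c i)).symm⟩
  exact h.mono_ac AbsolutelyContinuous.rfl (absolutelyContinuous_smul (hc i))

theorem exists_not_mutuallySingular_of_sum_smul_eq {m : ι → Measure α} {m' : ι' → Measure α}
    {c : ι → ℝ≥0∞} {d : ι' → ℝ≥0∞} (hc : ∀ i, c i ≠ 0) (hd : ∀ i', d i' ≠ 0)
    (heq : ∑ i, c i • m i = ∑ i', d i' • m' i') {i : ι} (hm : m i ≠ 0) :
    ∃ i', ¬ m i ⟂ₘ m' i' := by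
  by_contra! h
  have hsum : m i ⟂ₘ ∑ j, c j • m j := heq ▸ (mutuallySingular_sum_smul_iff hd).2 h
  exact hm ((MutuallySingular.self_iff _).1 ((mutuallySingular_sum_smul_iff hc).1 hsum i))

theorem exists_restrict_sum_smul_eq {m : ι → Measure α} (hsing : Pairwise fun i j => m i ⟂ₘ m j)
    (i : ι) : ∃ s : Set α, ∀ c : ι → ℝ≥0∞, (∑ j, c j • m j).restrict s = c i • m i := by
  classical
  set s := ⋂ (j) (hj : j ≠ i), (hsing hj.symm).nullSetᶜ
  have hmi : m i sᶜ = 0 := by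
    simp only [s, Set.compl_iInter, compl_compl]
    exact measure_iUnion_null fun j => measure_iUnion_null fun hj => (hsing hj.symm).measure_nullSet
  have hmj : ∀ j ≠ i, (m j).restrict s = 0 := fun j hj => restrict_eq_zero.2 <|
    measure_mono_null (Set.iInter₂_subset j hj) (hsing hj.symm).measure_compl_nullSet
  refine ⟨s, fun c => ?_⟩
  rw [← sum_fintype, restrict_sum_of_countable, sum_fintype,
    Finset.sum_eq_single i (fun j _ hj => by rw [restrict_smul, hmj j hj, smul_zero])
      (fun h => absurd (Finset.mem_univ i) h),
    restrict_smul, restrict_eq_self_of_ae_mem (ae_iff.2 hmi)]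

theorem eq_of_sum_smul_eq_sum_smul {m : ι → Measure α} [∀ i, IsFiniteMeasure (m i)]
    (hsing : Pairwise fun i j => m i ⟂ₘ m j) (hm : ∀ i, m i ≠ 0) {c d : ι → ℝ≥0∞}
    (heq : ∑ i, c i • m i = ∑ i, d i • m i) : c = d := by
  funext i
  obtain ⟨s, hs⟩ := exists_restrict_sum_smul_eq hsing i
  have hci : c i • m i = d i • m i := by rw [← hs c, ← hs d, heq]
  have := congrArg (fun ν : Measure α => ν Set.univ) hci
  simp only [smul_apply, smul_eq_mul] at this
  exact (ENNReal.mul_left_inj (measure_univ_ne_zero.2 (hm i)) (measure_ne_top _ _)).1 this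

theorem exists_equiv_of_sum_smul_eq {m : ι → Measure α} {m' : ι' → Measure α}
    [∀ i', IsFiniteMeasure (m' i')] {c : ι → ℝ≥0∞} {d : ι' → ℝ≥0∞}
    (hc : ∀ i, c i ≠ 0) (hd : ∀ i', d i' ≠ 0) (hm : ∀ i, m i ≠ 0) (hm' : ∀ i', m' i' ≠ 0)
    (hsing : Pairwise fun i j => m i ⟂ₘ m j) (hsing' : Pairwise fun i' j' => m' i' ⟂ₘ m' j')
    (hdich : ∀ i i', m i = m' i' ∨ m i ⟂ₘ m' i')
    (heq : ∑ i, c i • m i = ∑ i', d i' • m' i') :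
    ∃ ψ : ι ≃ ι', ∀ i, m i = m' (ψ i) ∧ c i = d (ψ i) := by
  have hmatch : ∀ i, ∃ i', m i = m' i' := fun i =>
    (exists_not_mutuallySingular_of_sum_smul_eq hc hd heq (hm i)).imp fun i' h =>
      (hdich i i').resolve_right h
  choose f hf using hmatch
  have hinj : Function.Injective f := fun i j hij => by
    by_contra hne
    exact hm i ((MutuallySingular.self_iff _).1 (by simpa [hf, hij] using hsing hne))
  have hsurj : Function.Surjective f := fun i' => by
    obtain ⟨j, hj⟩ := exists_not_mutuallySingular_of_sum_smul_eq hd hc heq.symm (hm' i')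
    rw [hf j] at hj
    by_contra! hne
    exact hj (hsing' (hne j).symm)
  set ψ := Equiv.ofBijective f ⟨hinj, hsurj⟩
  have hweights : c ∘ ψ.symm = d := by
    refine eq_of_sum_smul_eq_sum_smul hsing' hm' ?_
    rw [← heq, ← ψ.sum_comp]
    simp only [Function.comp_apply, Equiv.symm_apply_apply, hf]
    rfl
  exact ⟨ψ, fun i => ⟨hf i, by simp [← hweights]⟩⟩

end MeasureTheory.Measure

theorem stmt_10_general {Z Z' : Type*} [MeasurableSpace Z] [MeasurableSpace Z']
    {ι ι' : Type*} [Fintype ι] [Fintype ι']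
    (φ : Z ≃ᵐ Z')
    (μ : ι → Measure (Z × Z)) (μ' : ι' → Measure (Z' × Z'))
    (hμpr : ∀ I, IsProbabilityMeasure (μ I)) (hμ'pr : ∀ I', IsProbabilityMeasure (μ' I'))
    (p : ι → ℝ≥0∞) (p' : ι' → ℝ≥0∞)
    (hp : ∀ I, 0 < p I) (hp' : ∀ I', 0 < p' I')
    (hsing : ∀ I J, I ≠ J → (μ I).MutuallySingular (μ J))
    (hsing' : ∀ I' J', I' ≠ J' → (μ' I').MutuallySingular (μ' J'))
    (hdich : ∀ I I', Measure.map (φ.prodCongr φ) (μ I) = μ' I' ∨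
      (Measure.map (φ.prodCongr φ) (μ I)).MutuallySingular (μ' I'))
    (hpush : Measure.map (φ.prodCongr φ) (∑ I, p I • μ I) = ∑ I', p' I' • μ' I') :
    ∃ ψ : ι ≃ ι', ∀ I,
      Measure.map (φ.prodCongr φ) (μ I) = μ' (ψ I) ∧ p I = p' (ψ I) := by
  set e := φ.prodCongr φ
  have hmap : Measure.map e (∑ I, p I • μ I) = ∑ I, p I • Measure.map e (μ I) := by
    simp_rw [Measure.map_finset_sum' e.measurable.aemeasurable, Measure.map_smul]
  have hν : ∀ I, Measure.map e (μ I) ≠ 0 := fun I =>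
    (Measure.isProbabilityMeasure_map e.measurable.aemeasurable).ne_zero
  exact Measure.exists_equiv_of_sum_smul_eq (fun I => (hp I).ne') (fun I' => (hp' I').ne') hν
    (fun I' => IsProbabilityMeasure.ne_zero _)
    (fun I J h => e.measurableEmbedding.mutuallySingular_map (hsing I J h))
    (fun I' J' h => hsing' I' J' h) hdich (hmap ▸ hpush)

/-- If the diffeomorphism `(φ, φ)` maps a finite mixture of pairwise mutually singular
probability components `μ_I` (with positive weights) to another such mixture `μ'_{I'}`
whose components are distinguishable (each pushed-forward component is either equal to or
mutually singular with each primed component), then there is a bijection `ψ` of the index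
sets matching components and weights. -/
theorem stmt_10 {Z Z' : Type*} [MeasurableSpace Z] [MeasurableSpace Z']
    {ι ι' : Type*} [Fintype ι] [Fintype ι']
    (φ : Z ≃ᵐ Z')
    (μ : ι → Measure (Z × Z)) (μ' : ι' → Measure (Z' × Z'))
    (hμpr : ∀ I, IsProbabilityMeasure (μ I)) (hμ'pr : ∀ I', IsProbabilityMeasure (μ' I'))
    (p : ι → ℝ≥0∞) (p' : ι' → ℝ≥0∞)
    (hp : ∀ I, 0 < p I) (hp' : ∀ I', 0 < p' I')
    (hsum : ∑ I, p I = 1) (hsum' : ∑ I', p' I' = 1)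
    (hsing : ∀ I J, I ≠ J → (μ I).MutuallySingular (μ J))
    (hsing' : ∀ I' J', I' ≠ J' → (μ' I').MutuallySingular (μ' J'))
    (hdich : ∀ I I', Measure.map (φ.prodCongr φ) (μ I) = μ' I' ∨
      (Measure.map (φ.prodCongr φ) (μ I)).MutuallySingular (μ' I'))
    (hpush : Measure.map (φ.prodCongr φ) (∑ I, p I • μ I) = ∑ I', p' I' • μ' I') :
    ∃ ψ : ι ≃ ι', ∀ I,
      Measure.map (φ.prodCongr φ) (μ I) = μ' (ψ I) ∧ p I = p' (ψ I) :=
  stmt_10_general φ μ μ' hμpr hμ'pr p p' hp hp' hsing hsing' hdich hpush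
end

section
/- Let φ : ℝⁿ → ℝⁿ be a diffeomorphism and ψ : {1,…,n} → {1,…,n} a permutation such that for every i, the component φ(x)_{ψ(i)} depends only on x_i (i.e., φ is ψ-diagonal). Then each component map φ_i : ℝ → ℝ, defined by φ_i(x_i) = φ(x)_{ψ(i)}, is itself a diffeomorphism of ℝ. -/
/-- If `φ : ℝⁿ → ℝⁿ` is a diffeomorphism that is `ψ`-diagonal for a permutation `ψ`
(with components `φc i : ℝ → ℝ` satisfying `φ x (ψ i) = φc i (x i)`), then each
component map `φc i` is itself a diffeomorphism of `ℝ`. -/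
theorem stmt_11 (n : ℕ) (φ : (Fin n → ℝ) → (Fin n → ℝ))
    (hφ : ContDiff ℝ (⊤ : ℕ∞) φ)
    (t : (Fin n → ℝ) → (Fin n → ℝ)) (ht : ContDiff ℝ (⊤ : ℕ∞) t)
    (htl : Function.LeftInverse t φ) (htr : Function.RightInverse t φ)
    (ψ : Equiv.Perm (Fin n)) (φc : Fin n → ℝ → ℝ)
    (hdiag : ∀ (x : Fin n → ℝ) (i : Fin n), φ x (ψ i) = φc i (x i)) :
    ∀ i : Fin n, ContDiff ℝ (⊤ : ℕ∞) (φc i) ∧ ∃ g : ℝ → ℝ, ContDiff ℝ (⊤ : ℕ∞) g ∧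
      Function.LeftInverse g (φc i) ∧ Function.RightInverse g (φc i) := by
  intro i
  have hcomp : ∀ y : ℝ, φc i y = φ (Function.update (0 : Fin n → ℝ) i y) (ψ i) := by
    intro y
    rw [hdiag, Function.update_self]
  constructor
  · have : ContDiff ℝ (⊤ : ℕ∞) fun y : ℝ => φ (Function.update (0 : Fin n → ℝ) i y) (ψ i) :=
      (contDiff_apply ℝ ℝ (ψ i)).comp (hφ.comp (contDiff_update ((⊤ : ℕ∞) : WithTop ℕ∞) 0 i))
    have heq : (φc i) = fun y : ℝ => φ (Function.update (0 : Fin n → ℝ) i y) (ψ i) :=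
      funext fun y => hcomp y
    rw [heq]; exact this
  · refine ⟨fun z => t (Function.update (φ 0) (ψ i) z) i, ?_, ?_, ?_⟩
    · exact (contDiff_apply ℝ ℝ i).comp (ht.comp (contDiff_update ((⊤ : ℕ∞) : WithTop ℕ∞) (φ 0) (ψ i)))
    · intro y
      have key : Function.update (φ 0) (ψ i) (φc i y)
          = φ (Function.update (0 : Fin n → ℝ) i y) := by
        funext k
        obtain ⟨j, rfl⟩ := ψ.surjective k
        rw [hdiag]
        by_cases hj : j = i
        · subst hj; simp
        · rw [Function.update_of_ne (fun h => hj (ψ.injective h)),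
            Function.update_of_ne hj, Pi.zero_apply]
          exact (hdiag 0 j).trans (by simp)
      simp only [key, htl _, Function.update_self]
    · intro z
      have := congrFun (htr (Function.update (φ 0) (ψ i) z)) (ψ i)
      rw [hdiag] at this
      rw [this, Function.update_self]
end

section
/- Let φ : ℝ² → ℝ² be defined by φ(z₁, z₂) = (z₁, Γ(z₁)(z₂)), where Γ assigns to each z₁ a diffeomorphism of ℝ preserving a fixed probability measure π on ℝ (with smooth positive density), and Γ depends continuously on z₁. Then Γ(z₁) is constant in z₁ (all equal to the same map), and consequently φ is diagonal, i.e., φ(z₁, z₂)₂ does not depend on z₁. -/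
open MeasureTheory

/-- Let `π` be a probability measure on `ℝ` with smooth strictly positive density, and let
`Γ` assign to each `z₁ ∈ ℝ` a diffeomorphism of `ℝ` preserving `π`, continuously in `z₁`
(jointly continuous). Then `Γ(z₁)` is the same map for all `z₁`; consequently
`φ(z₁, z₂) = (z₁, Γ(z₁)(z₂))` is diagonal, i.e. its second component does not depend on
`z₁`. -/
theorem stmt_17 (ρ : ℝ → ℝ) (hρ : ContDiff ℝ (⊤ : ℕ∞) ρ) (hρpos : ∀ x, 0 < ρ x)
    (π : Measure ℝ) (hπ : π = volume.withDensity fun x => ENNReal.ofReal (ρ x))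
    (hπpr : IsProbabilityMeasure π)
    (Γ : ℝ → ℝ → ℝ)
    (hcont : Continuous fun p : ℝ × ℝ => Γ p.1 p.2)
    (hdiff : ∀ z₁, Differentiable ℝ (Γ z₁))
    (hinv : ∀ z₁, ∃ g : ℝ → ℝ, Differentiable ℝ g ∧
      Function.LeftInverse g (Γ z₁) ∧ Function.RightInverse g (Γ z₁))
    (hmp : ∀ z₁, MeasurePreserving (Γ z₁) π π) :
    (∀ a b : ℝ, Γ a = Γ b) ∧
      ∀ (z₁ z₁' z₂ : ℝ),
        ((fun p : ℝ × ℝ => (p.1, Γ p.1 p.2)) (z₁, z₂)).2 =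
        ((fun p : ℝ × ℝ => (p.1, Γ p.1 p.2)) (z₁', z₂)).2 := by
  classical
  -- positivity of π on sets of positive volume
  have hpos : ∀ (s : Set ℝ), MeasurableSet s → 0 < volume s → 0 < π s := by
    intro s hs hvol
    rw [hπ, withDensity_apply _ hs, lintegral_pos_iff_support]
    · have hsupp : (Function.support fun x => ENNReal.ofReal (ρ x)) = Set.univ := by
        ext x
        simp only [Function.mem_support, Set.mem_univ, iff_true]
        exact (ENNReal.ofReal_pos.mpr (hρpos x)).ne'
      simpa [hsupp, Measure.restrict_apply_univ] using hvol
    · exact ENNReal.measurable_ofReal.comp hρ.continuous.measurable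
  -- CDF and survival function
  set F : ℝ → ENNReal := fun x => π (Set.Iic x) with hF
  set G : ℝ → ENNReal := fun x => π (Set.Ici x) with hG
  have hFmono : StrictMono F := by
    intro a b hab
    have hdisj : Disjoint (Set.Iic a) (Set.Ioc a b) :=
      Set.disjoint_left.mpr (fun x hx hx' => absurd hx (by simp [not_le, hx'.1]))
    have hun : F b = F a + π (Set.Ioc a b) := by
      rw [hF]; dsimp only
      rw [← measure_union hdisj measurableSet_Ioc, Set.Iic_union_Ioc_eq_Iic hab.le]
    rw [hun]
    have h1 : 0 < π (Set.Ioc a b) :=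
      hpos _ measurableSet_Ioc (by simp [Real.volume_Ioc, sub_pos.mpr hab])
    exact ENNReal.lt_add_right (measure_ne_top π _) h1.ne'
  have hGanti : StrictAnti G := by
    intro a b hab
    have hdisj : Disjoint (Set.Ico a b) (Set.Ici b) :=
      Set.disjoint_left.mpr (fun x hx hx' => absurd hx.2 (not_lt.mpr hx'))
    have hun : G a = π (Set.Ico a b) + G b := by
      rw [hG]; dsimp only
      rw [← measure_union hdisj measurableSet_Ici, Set.Ico_union_Ici_eq_Ici hab.le]
    rw [hun]
    have h1 : 0 < π (Set.Ico a b) :=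
      hpos _ measurableSet_Ico (by simp [Real.volume_Ico, sub_pos.mpr hab])
    calc G b = 0 + G b := (zero_add _).symm
      _ < π (Set.Ico a b) + G b := ENNReal.add_lt_add_right (measure_ne_top π _) h1
  -- the inverses
  choose g hgdiff hgl hgr using hinv
  have hinj : ∀ z, Function.Injective (Γ z) := fun z => (hgl z).injective
  have hcontz : ∀ c : ℝ, Continuous fun z => Γ z c := fun c =>
    hcont.comp (continuous_id.prodMk continuous_const)
  have hcontΓ : ∀ z, Continuous (Γ z) := fun z =>
    hcont.comp (continuous_const.prodMk continuous_id)
  have hdich : ∀ z, StrictMono (Γ z) ∨ StrictAnti (Γ z) := fun z =>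
    (hcontΓ z).strictMono_of_inj (hinj z)
  -- monotone case : Γ z = id
  have hmono_id : ∀ z, StrictMono (Γ z) → ∀ x, Γ z x = x := by
    intro z hm x
    have hpre : Γ z ⁻¹' Set.Iic x = Set.Iic (g z x) := by
      ext y
      simp only [Set.mem_preimage, Set.mem_Iic]
      conv_lhs => rw [← hgr z x]
      exact hm.le_iff_le
    have hmeas : F (g z x) = F x := by
      have := (hmp z).measure_preimage (s := Set.Iic x) measurableSet_Iic.nullMeasurableSet
      rw [hpre] at this
      exact this
    have hx : g z x = x := hFmono.injective hmeas
    have := hgr z x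
    rwa [hx] at this
  -- antitone case : G (g z x) = F x
  have hanti_eq : ∀ z, StrictAnti (Γ z) → ∀ x, G (g z x) = F x := by
    intro z ha x
    have hpre : Γ z ⁻¹' Set.Iic x = Set.Ici (g z x) := by
      ext y
      simp only [Set.mem_preimage, Set.mem_Iic, Set.mem_Ici]
      conv_lhs => rw [← hgr z x]
      exact ha.le_iff_ge
    have := (hmp z).measure_preimage (s := Set.Iic x) measurableSet_Iic.nullMeasurableSet
    rw [hpre] at this
    exact this
  -- the set of monotone parameters is clopen
  set U : Set ℝ := {z | Γ z 0 < Γ z 1} with hU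
  have hUopen : IsOpen U := isOpen_lt (hcontz 0) (hcontz 1)
  have hcompl : Uᶜ = {z | Γ z 1 < Γ z 0} := by
    ext z
    simp only [Set.mem_compl_iff, hU, Set.mem_setOf_eq, not_lt]
    constructor
    · intro h
      exact lt_of_le_of_ne h (fun he => by simpa using hinj z he)
    · exact le_of_lt
  have hUclosed : IsClosed U := by
    rw [← isOpen_compl_iff, hcompl]
    exact isOpen_lt (hcontz 1) (hcontz 0)
  have hmain : ∀ a b : ℝ, Γ a = Γ b := by
    rcases isClopen_iff.mp ⟨hUclosed, hUopen⟩ with hUe | hUu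
    · -- all antitone
      have hA : ∀ z, StrictAnti (Γ z) := by
        intro z
        rcases hdich z with hm | ha
        · exfalso
          have : z ∈ U := hm (by norm_num)
          simp [hUe] at this
        · exact ha
      intro a b
      funext x
      have h1 : G (g a (Γ b x)) = F (Γ b x) := hanti_eq a (hA a) (Γ b x)
      have h2 : G (g b (Γ b x)) = F (Γ b x) := hanti_eq b (hA b) (Γ b x)
      have h3 : g a (Γ b x) = g b (Γ b x) := hGanti.injective (h1.trans h2.symm)
      have h4 : g b (Γ b x) = x := hgl b x
      have h5 := hgr a (Γ b x)
      rw [h3, h4] at h5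
      exact h5
    · -- all monotone, hence identity
      have hM : ∀ z, ∀ x, Γ z x = x := by
        intro z
        rcases hdich z with hm | ha
        · exact hmono_id z hm
        · exfalso
          have hz : z ∈ U := hUu ▸ Set.mem_univ z
          have : Γ z 1 < Γ z 0 := ha (by norm_num)
          exact absurd hz (by simp [hU, not_lt, this.le])
      intro a b
      funext x
      rw [hM a x, hM b x]
  exact ⟨hmain, fun z₁ z₁' z₂ => by simp only; rw [hmain z₁ z₁']⟩
end

section
/- Two-variable imperfect-intervention non-identifiability: Let C be an SCM on ℝ² with graph z₁ → z₂, mechanisms f₁(ε₁) and f₂(ε₂; z₁), and imperfect intervention mechanism f̃₂(ε̃₂; z₁) possibly depending on z₁. Define C' with f'₂(ε₂; z₁) = f₂(ε₂; z₁) + z₁ and f̃'₂(ε̃₂; z₁) = f̃₂(ε̃₂; z₁) + z₁ and all other components equal. Then the map φ(z₁, z₂) = (z₁, z₁ + z₂) pushes the weakly supervised distribution of C forward to that of C', yet φ is not diagonal (its second component depends on z₁). -/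
open MeasureTheory
open scoped ENNReal

/-- The weakly supervised distribution over `(z, z̃) ∈ ℝ² × ℝ²` for a two-variable SCM
`z₁ → z₂` with mechanisms `f₁, f₂`, imperfect (possibly parent-dependent) intervention
mechanisms `tf₁, tf₂`, noise measures `μ₁, μ₂`, intervention-noise measures `ν₁, ν₂`, and
intervention weights `w∅, w₁, w₂` over the empty intervention, interventions on `z₁` and
on `z₂`. -/
noncomputable def weaklySupervised (f₁ : ℝ → ℝ) (f₂ : ℝ → ℝ → ℝ)
    (tf₁ : ℝ → ℝ) (tf₂ : ℝ → ℝ → ℝ)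
    (μ₁ μ₂ ν₁ ν₂ : Measure ℝ) (w₀ w₁ w₂ : ℝ≥0∞) :
    Measure ((ℝ × ℝ) × (ℝ × ℝ)) :=
  w₀ • Measure.map
      (fun ε : ℝ × ℝ =>
        ((f₁ ε.1, f₂ ε.2 (f₁ ε.1)), (f₁ ε.1, f₂ ε.2 (f₁ ε.1))))
      (μ₁.prod μ₂)
  + w₁ • Measure.map
      (fun p : (ℝ × ℝ) × ℝ =>
        ((f₁ p.1.1, f₂ p.1.2 (f₁ p.1.1)), (tf₁ p.2, f₂ p.1.2 (tf₁ p.2))))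
      ((μ₁.prod μ₂).prod ν₁)
  + w₂ • Measure.map
      (fun p : (ℝ × ℝ) × ℝ =>
        ((f₁ p.1.1, f₂ p.1.2 (f₁ p.1.1)), (f₁ p.1.1, tf₂ p.2 (f₁ p.1.1))))
      ((μ₁.prod μ₂).prod ν₂)

/-- Two-variable imperfect-intervention non-identifiability: replacing `f₂(ε₂; z₁)` by
`f₂(ε₂; z₁) + z₁` and `tf₂(ε̃₂; z₁)` by `tf₂(ε̃₂; z₁) + z₁` yields a model `C'` whose
weakly supervised distribution is the pushforward of that of `C` under
`(φ, φ)` with `φ(z₁, z₂) = (z₁, z₁ + z₂)`; yet `φ` is not diagonal, since its second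
component depends on `z₁`. -/
theorem stmt_19 (f₁ : ℝ → ℝ) (f₂ : ℝ → ℝ → ℝ) (tf₁ : ℝ → ℝ) (tf₂ : ℝ → ℝ → ℝ)
    (hf₁ : Measurable f₁) (hf₂ : Measurable fun p : ℝ × ℝ => f₂ p.1 p.2)
    (htf₁ : Measurable tf₁) (htf₂ : Measurable fun p : ℝ × ℝ => tf₂ p.1 p.2)
    (μ₁ μ₂ ν₁ ν₂ : Measure ℝ)
    (hμ₁ : IsProbabilityMeasure μ₁) (hμ₂ : IsProbabilityMeasure μ₂)
    (hν₁ : IsProbabilityMeasure ν₁) (hν₂ : IsProbabilityMeasure ν₂)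
    (w₀ w₁ w₂ : ℝ≥0∞)
    (φ : ℝ × ℝ → ℝ × ℝ) (hφ : ∀ z : ℝ × ℝ, φ z = (z.1, z.1 + z.2)) :
    Measure.map (fun p : (ℝ × ℝ) × (ℝ × ℝ) => (φ p.1, φ p.2))
        (weaklySupervised f₁ f₂ tf₁ tf₂ μ₁ μ₂ ν₁ ν₂ w₀ w₁ w₂)
      = weaklySupervised f₁ (fun e z₁ => f₂ e z₁ + z₁) tf₁
          (fun e z₁ => tf₂ e z₁ + z₁) μ₁ μ₂ ν₁ ν₂ w₀ w₁ w₂ ∧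
    ∃ z₁ z₁' z₂ : ℝ, (φ (z₁, z₂)).2 ≠ (φ (z₁', z₂)).2 := by
  have hφ' : φ = fun z : ℝ × ℝ => (z.1, z.1 + z.2) := funext hφ
  subst hφ'
  constructor
  · have hΦ : Measurable (fun p : (ℝ × ℝ) × (ℝ × ℝ) =>
        ((fun z : ℝ × ℝ => (z.1, z.1 + z.2)) p.1,
         (fun z : ℝ × ℝ => (z.1, z.1 + z.2)) p.2)) := by fun_prop
    have h0 : Measurable (fun ε : ℝ × ℝ =>
        ((f₁ ε.1, f₂ ε.2 (f₁ ε.1)), (f₁ ε.1, f₂ ε.2 (f₁ ε.1)))) := by fun_prop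
    have h1 : Measurable (fun p : (ℝ × ℝ) × ℝ =>
        ((f₁ p.1.1, f₂ p.1.2 (f₁ p.1.1)), (tf₁ p.2, f₂ p.1.2 (tf₁ p.2)))) := by fun_prop
    have h2 : Measurable (fun p : (ℝ × ℝ) × ℝ =>
        ((f₁ p.1.1, f₂ p.1.2 (f₁ p.1.1)), (f₁ p.1.1, tf₂ p.2 (f₁ p.1.1)))) := by fun_prop
    simp only [weaklySupervised]
    rw [Measure.map_add _ _ hΦ, Measure.map_add _ _ hΦ,
      Measure.map_smul, Measure.map_smul, Measure.map_smul,
      Measure.map_map hΦ h0, Measure.map_map hΦ h1, Measure.map_map hΦ h2]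
    simp only [Function.comp_def]
    congr 1
    · congr 1
      · congr 2
        funext ε
        simp [add_comm]
      · congr 2
        funext p
        simp [add_comm]
    · congr 2
      funext p
      simp [add_comm]
  · exact ⟨0, 1, 0, by norm_num⟩
end
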